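/- Let (M₁, d₁) and (M₂, d₂) be metric spaces and equip Ω = M₁ × M₂ with a distance d_Ω satisfying max{d₁(z¹,w¹), d₂(z²,w²)} ≤ d_Ω((z¹,z²),(w¹,w²)) ≤ d₁(z¹,w¹) + d₂(z²,w²) for all points of Ω (for example the sup distance). Fix a basepoint x₀ = (x₀¹, x₀²) ∈ Ω, suppose M₂ contains two distinct points p ≠ q, and let (aₙ) be a sequence in M₁ with d₁(x₀¹, aₙ) → ∞. Define g₁(n) = (aₙ, p) and g₂(n) = (aₙ, q). Then g₁(n) ≠ g₂(n) for every n, d_Ω(g₁(n), g₂(n)) is bounded above by the constant d₂(p, q) for every n, and the Gromov products ⟨g₁(n), g₂(n)⟩_{x₀} tend to infinity as n → ∞. (Hence the rigidity property of the paper fails for such product spaces.) -/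

import Mathlib

/-! Both `(aₙ, p)` and `(aₙ, q)` are at least `d₁(x₀¹, aₙ)` away from `x₀` but at most
`d₂(p, q)` apart, so their Gromov product is at least `d₁(x₀¹, aₙ) - d₂(p, q) / 2`. -/

open Filter

noncomputable def gromovProduct {X : Type*} (d : X → X → ℝ) (x₀ x y : X) : ℝ :=
  (d x₀ x + d x₀ y - d x y) / 2

theorem sub_half_le_gromovProduct {X : Type*} {d : X → X → ℝ} {x₀ x y : X} {r c : ℝ}
    (hx : r ≤ d x₀ x) (hy : r ≤ d x₀ y) (hxy : d x y ≤ c) :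
    r - c / 2 ≤ gromovProduct d x₀ x y := by
  unfold gromovProduct
  linarith

theorem tendsto_gromovProduct_atTop {X : Type*} {d : X → X → ℝ} {x₀ : X} {x y : ℕ → X}
    {r : ℕ → ℝ} {c : ℝ} (hr : Tendsto r atTop atTop) (hx : ∀ n, r n ≤ d x₀ (x n))
    (hy : ∀ n, r n ≤ d x₀ (y n)) (hxy : ∀ n, d (x n) (y n) ≤ c) :
    Tendsto (fun n => gromovProduct d x₀ (x n) (y n)) atTop atTop :=
  tendsto_atTop_mono (fun n => sub_half_le_gromovProduct (hx n) (hy n) (hxy n))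
    (tendsto_atTop_add_const_right _ _ hr)

/-- Failure of the rigidity property for products: in `Ω = M₁ × M₂` with a distance
between the max and sum of the coordinate distances, the sequences `g₁(n) = (aₙ, p)`
and `g₂(n) = (aₙ, q)` (with `p ≠ q` and `d₁(x₀¹,aₙ) → ∞`) are pointwise distinct,
stay at distance at most `d₂(p,q)` from each other, yet their Gromov products with
basepoint `x₀` tend to infinity. -/
theorem product_rigidity_fails {M₁ M₂ : Type*}
    [MetricSpace M₁] [MetricSpace M₂] (dΩ : M₁ × M₂ → M₁ × M₂ → ℝ)
    (hlb : ∀ z w : M₁ × M₂, max (dist z.1 w.1) (dist z.2 w.2) ≤ dΩ z w)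
    (hub : ∀ z w : M₁ × M₂, dΩ z w ≤ dist z.1 w.1 + dist z.2 w.2)
    (x₀ : M₁ × M₂) (p q : M₂) (hpq : p ≠ q)
    (a : ℕ → M₁) (ha : Tendsto (fun n => dist x₀.1 (a n)) atTop atTop) :
    (∀ n, (a n, p) ≠ (a n, q)) ∧
      (∀ n, dΩ (a n, p) (a n, q) ≤ dist p q) ∧
      Tendsto (fun n => (dΩ x₀ (a n, p) + dΩ x₀ (a n, q) - dΩ (a n, p) (a n, q)) / 2)
        atTop atTop := by
  have hclose : ∀ n, dΩ (a n, p) (a n, q) ≤ dist p q := fun n => by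
    simpa using hub (a n, p) (a n, q)
  have hfar : ∀ z, dist x₀.1 z.1 ≤ dΩ x₀ z := fun z => (le_max_left _ _).trans (hlb x₀ z)
  refine ⟨fun n h => hpq (congrArg Prod.snd h), hclose, ?_⟩
  exact tendsto_gromovProduct_atTop ha (fun n => hfar (a n, p)) (fun n => hfar (a n, q)) hclose
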